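/- Digon case (with τ₀ = 0.32): (i) I(circPerim0(2.29), 2, −2τ₀, 1) > 0, i.e., √(4π·2.29 − 2.29²) + 0.64·B' + 3·p₅' − p₅ > 0; and (ii) for all ρ ∈ [0.1, 1], I(circPerim0(ρπ/3), 2, ρπ/3, ρ) > 0, i.e., √(4π·(ρπ/3) − (ρπ/3)²) − (ρπ/3)·B' + 3·p₅' − ρ·p₅ > 0. -/

import Mathlib

open Real

/-- Perimeter of a regular spherical `n`-gon of area `x` on the unit sphere. -/
noncomputable def regPerim (x n : ℝ) : ℝ :=
  n * Real.arccos ((Real.cos (2 * π / n) +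
      (Real.cos ((π - (2 * π - x) / n) / 2)) ^ 2) /
      (Real.sin ((π - (2 * π - x) / n) / 2)) ^ 2)

/-- Circumference of a circle on the unit sphere enclosing area `a`. -/
noncomputable def circPerim0 (a : ℝ) : ℝ := Real.sqrt (4 * π * a - a ^ 2)

/-- Perimeter of the regular spherical pentagon of area `π/3`. -/
noncomputable def p5 : ℝ := 5 * Real.arccos ((4 * Real.cos (2 * π / 5) + 1) / 3)

/-- Derivative at `n = 5` of `n ↦ regPerim (π/3) n`. -/
noncomputable def p5' : ℝ := deriv (fun n : ℝ => regPerim (π / 3) n) 5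

/-- `B' = -∂₁ regPerim (π/3, 5)`. -/
noncomputable def B' : ℝ := - deriv (fun x : ℝ => regPerim x 5) (π / 3)

/-- The isoperimetric functional `I(ℓ, n, t, ρ)`. -/
noncomputable def Ifun (ℓ n t ρ : ℝ) : ℝ := ℓ - t * B' + (5 - n) * p5' - ρ * p5

/-!
At `(x, n) = (π/3, 5)` the half angle `α/2` equals `π/3` and `cos (2π/5) = (√5 - 1)/4`, so the
argument of `arccos` in `regPerim` is `√5/3`, whose `arccos` derivative is `-3/2`. Differentiating
through this point gives closed forms `B' = -(3√3 + √15)/6` and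
`p₅' = A - (4π/5) sin (2π/5) + π (3√3 + √15)/18`, `p₅ = 5A`, with `A = arccos (√5/3)`.
Both inequalities are then linear in `A`, `π (3√3 + √15)`, `π sin (2π/5)` and the circle
perimeter, and follow from interval enclosures of these quantities. Part (i) holds with a margin
of only `0.002`, which forces the sharp bound `A ≤ 0.73`, i.e. `cos 0.73 < √5/3`.
-/

lemma cos_two_pi_div_five : cos (2 * π / 5) = (√5 - 1) / 4 := by
  rw [show 2 * π / 5 = 2 * (π / 5) by ring, cos_two_mul, cos_pi_div_five]
  linear_combination (1 / 8 : ℝ) * sq_sqrt (show (0 : ℝ) ≤ 5 by norm_num)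

lemma sqrt_five_div_three_lt_one : √5 / 3 < 1 := by
  rw [div_lt_one (by norm_num), sqrt_lt' (by norm_num)]; norm_num

lemma hasDerivAt_arccos_sqrt_five_div_three : HasDerivAt arccos (-(3 / 2)) (√5 / 3) := by
  have h := hasDerivAt_arccos (x := √5 / 3) (by have := sqrt_nonneg 5; linarith)
    sqrt_five_div_three_lt_one.ne
  have h1 : 1 - (√5 / 3) ^ 2 = (2 / 3) ^ 2 := by
    rw [div_pow, sq_sqrt (by norm_num)]; norm_num
  rwa [h1, sqrt_sq (by norm_num), show -(1 / (2 / 3 : ℝ)) = -(3 / 2) by norm_num] at h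

lemma regPerim_ratio_pentagon :
    (cos (2 * π / 5) + cos (π / 3) ^ 2) / sin (π / 3) ^ 2 = √5 / 3 := by
  rw [cos_two_pi_div_five, cos_pi_div_three, sq_sin_pi_div_three]; ring

/-- The chain rule behind both partial derivatives of `regPerim` at `(π/3, 5)`, where `c` stands
for `cos (2π/n)` and `u` for `α/2`. -/
lemma hasDerivAt_arccos_regPerim_ratio {c u : ℝ → ℝ} {c' u' t : ℝ}
    (hc : HasDerivAt c c' t) (hu : HasDerivAt u u' t)
    (hct : c t = cos (2 * π / 5)) (hut : u t = π / 3) :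
    HasDerivAt (fun s => arccos ((c s + cos (u s) ^ 2) / sin (u s) ^ 2))
      ((3 * √3 + √15) / 3 * u' - 2 * c') t := by
  have hq : (c t + cos (u t) ^ 2) / sin (u t) ^ 2 = √5 / 3 := by
    rw [hct, hut]; exact regPerim_ratio_pentagon
  have hD0 : sin (u t) ^ 2 ≠ 0 := by rw [hut, sq_sin_pi_div_three]; norm_num
  have h := (hq ▸ hasDerivAt_arccos_sqrt_five_div_three).comp t
    ((hc.fun_add (hu.cos.fun_pow 2)).fun_div (hu.sin.fun_pow 2) hD0)
  refine h.congr_deriv ?_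
  rw [hut, hct, cos_two_pi_div_five, cos_pi_div_three, sin_pi_div_three,
    show √15 = √3 * √5 by rw [← sqrt_mul (by norm_num)]; norm_num]
  have h3 : √3 ^ 2 = 3 := sq_sqrt (by norm_num)
  field_simp
  linear_combination √3 * (24 * √3 * c' - 4 * u' * √5 * (√3 ^ 2 + 3) - 12 * √3 ^ 2 * u') * h3

lemma hasDerivAt_regPerim_area :
    HasDerivAt (fun x => regPerim x 5) ((3 * √3 + √15) / 6) (π / 3) := by
  have hu : HasDerivAt (fun x : ℝ => (π - (2 * π - x) / 5) / 2) (1 / 10) (π / 3) :=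
    ((((hasDerivAt_id' (π / 3)).const_sub (2 * π)).div_const 5).const_sub π).div_const 2
      |>.congr_deriv (by norm_num)
  exact (hasDerivAt_arccos_regPerim_ratio (hasDerivAt_const _ _) hu rfl (by ring)).const_mul 5
    |>.congr_deriv (by ring)

lemma hasDerivAt_regPerim_sides :
    HasDerivAt (fun n => regPerim (π / 3) n)
      (arccos (√5 / 3) - 4 * π / 5 * sin (2 * π / 5) + π * (3 * √3 + √15) / 18) 5 := by
  have hc : HasDerivAt (fun n : ℝ => cos (2 * π / n)) (2 * π / 25 * sin (2 * π / 5)) 5 :=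
    ((hasDerivAt_const (5 : ℝ) (2 * π)).fun_div (hasDerivAt_id' 5) (by norm_num)).cos
      |>.congr_deriv (by ring)
  have hu : HasDerivAt (fun n : ℝ => (π - (2 * π - π / 3) / n) / 2) (π / 30) 5 :=
    (((hasDerivAt_const (5 : ℝ) (2 * π - π / 3)).fun_div (hasDerivAt_id' 5)
      (by norm_num)).const_sub π).div_const 2 |>.congr_deriv (by ring)
  refine ((hasDerivAt_id' 5).mul (hasDerivAt_arccos_regPerim_ratio hc hu rfl (by ring)))
    |>.congr_deriv ?_
  rw [show (π - (2 * π - π / 3) / 5) / 2 = π / 3 by ring, regPerim_ratio_pentagon]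
  ring

lemma B'_eq : B' = -((3 * √3 + √15) / 6) := by
  rw [B', hasDerivAt_regPerim_area.deriv]

lemma p5'_eq :
    p5' = arccos (√5 / 3) - 4 * π / 5 * sin (2 * π / 5) + π * (3 * √3 + √15) / 18 :=
  hasDerivAt_regPerim_sides.deriv

lemma p5_eq : p5 = 5 * arccos (√5 / 3) := by
  rw [p5, cos_two_pi_div_five]; ring_nf

lemma cos_le_one_sub_sq_div_two_add {x : ℝ} (hx : |x| ≤ 1) :
    cos x ≤ 1 - x ^ 2 / 2 + |x| ^ 4 * (5 / 96) := by
  linarith [(abs_le.1 (cos_bound hx)).2]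

lemma cos_two_mul_le_of_cos_le {y c : ℝ} (h₀ : 0 ≤ cos y) (h : cos y ≤ c) :
    cos (2 * y) ≤ 2 * c ^ 2 - 1 := by
  rw [cos_two_mul]; nlinarith

/-- Degree-four Taylor bounds are too coarse at `0.73`, so we start at `0.73 / 16` and double
four times. -/
lemma cos_seventy_three_hundredths_lt : cos 0.73 < √5 / 3 := by
  have step : ∀ y c c₂ : ℝ, |y| ≤ 1 → cos y ≤ c → 2 * c ^ 2 - 1 ≤ c₂ → cos (2 * y) ≤ c₂ :=
    fun y c c₂ hy h hc => (cos_two_mul_le_of_cos_le (cos_pos_of_le_one hy).le h).trans hc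
  have h₀ : cos 0.045625 ≤ 0.998959406 :=
    (cos_le_one_sub_sq_div_two_add (by norm_num [abs_of_nonneg])).trans (by norm_num)
  have h₁ := step _ _ 0.99583979 (by norm_num [abs_of_nonneg]) h₀ (by norm_num)
  have h₂ := step _ _ 0.983393775 (by norm_num [abs_of_nonneg]) h₁ (by norm_num)
  have h₃ := step _ _ 0.934126634 (by norm_num [abs_of_nonneg]) h₂ (by norm_num)
  have h₄ := step _ _ 0.745185137 (by norm_num [abs_of_nonneg]) h₃ (by norm_num)
  rw [show (0.73 : ℝ) = 2 * (2 * (2 * (2 * 0.045625))) by norm_num]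
  refine h₄.trans_lt ?_
  rw [lt_div_iff₀ (by norm_num), lt_sqrt (by norm_num)]
  norm_num

lemma arccos_le_of_cos_le {x y : ℝ} (hy₀ : 0 ≤ y) (hyπ : y ≤ π) (h : cos y ≤ x) :
    arccos x ≤ y := by
  simpa [arccos_cos hy₀ hyπ] using arccos_le_arccos h

lemma le_arccos_of_le_cos {x y : ℝ} (hy₀ : 0 ≤ y) (hyπ : y ≤ π) (h : x ≤ cos y) :
    y ≤ arccos x := by
  simpa [arccos_cos hy₀ hyπ] using arccos_le_arccos h

lemma arccos_sqrt_five_div_three_le : arccos (√5 / 3) ≤ 0.73 :=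
  arccos_le_of_cos_le (by norm_num) (by linarith [pi_gt_three])
    cos_seventy_three_hundredths_lt.le

lemma two_div_three_le_arccos_sqrt_five_div_three : 2 / 3 ≤ arccos (√5 / 3) := by
  refine le_arccos_of_le_cos (by norm_num) (by linarith [pi_gt_three]) ?_
  have h : √5 / 3 ≤ 7 / 9 := by
    rw [div_le_iff₀ (by norm_num), sqrt_le_left (by norm_num)]; norm_num
  linarith [one_sub_sq_div_two_le_cos (x := 2 / 3)]

lemma sin_two_pi_div_five_mem : sin (2 * π / 5) ∈ Set.Icc (0 : ℝ) 0.9510566 := by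
  have h₀ : 0 ≤ sin (2 * π / 5) :=
    sin_nonneg_of_nonneg_of_le_pi (by positivity) (by linarith [pi_pos])
  refine ⟨h₀, ?_⟩
  have h5 : √5 ≤ 2.236068 := by rw [sqrt_le_left (by norm_num)]; norm_num
  have hsq : sin (2 * π / 5) ^ 2 = (10 + 2 * √5) / 16 := by
    rw [sin_sq, cos_two_pi_div_five]
    linear_combination (-1 / 16 : ℝ) * sq_sqrt (show (0 : ℝ) ≤ 5 by norm_num)
  nlinarith

lemma three_mul_sqrt_three_add_sqrt_fifteen_mem :
    3 * √3 + √15 ∈ Set.Ioo (9.0691 : ℝ) 9.0692 := by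
  have h3 : 1.73205 < √3 := by rw [lt_sqrt (by norm_num)]; norm_num
  have h3' : √3 < 1.73206 := by rw [sqrt_lt' (by norm_num)]; norm_num
  have h15 : 3.87298 < √15 := by rw [lt_sqrt (by norm_num)]; norm_num
  have h15' : √15 < 3.873 := by rw [sqrt_lt' (by norm_num)]; norm_num
  constructor <;> linarith

lemma add_mul_le_circPerim0 {ρ : ℝ} (hρ : ρ ∈ Set.Icc (0.1 : ℝ) 1) :
    0.8 + 2.6 * ρ ≤ circPerim0 (ρ * π / 3) := by
  obtain ⟨hρ₀, hρ₁⟩ := hρ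
  have hπ₀ : (9.869599 : ℝ) ≤ π ^ 2 := by nlinarith [pi_gt_d6]
  have hπ₁ : π ^ 2 ≤ 9.869607 := by nlinarith [pi_gt_d6, pi_lt_d6]
  refine le_sqrt_of_sq_le ?_
  -- `4πa - a² - (0.8 + 2.6ρ)²` is a concave quadratic in `ρ`, positive at both ends
  nlinarith [mul_nonneg (sub_nonneg.2 hρ₀) (sub_nonneg.2 hρ₁),
    mul_nonneg (sq_nonneg ρ) (sub_nonneg.2 hπ₁),
    mul_nonneg (by linarith : (0 : ℝ) ≤ ρ) (sub_nonneg.2 hπ₀)]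

theorem case_digon :
    Ifun (circPerim0 2.29) 2 (-(2 * 0.32)) 1 > 0 ∧
    (∀ ρ ∈ Set.Icc (0.1 : ℝ) 1,
        Ifun (circPerim0 (ρ * π / 3)) 2 (ρ * π / 3) ρ > 0) := by
  obtain ⟨hK₀, hK₁⟩ := three_mul_sqrt_three_add_sqrt_fifteen_mem
  obtain ⟨hs₀, hs₁⟩ := sin_two_pi_div_five_mem
  have hπK : 3.141592 * 9.0691 < π * (3 * √3 + √15) :=
    mul_lt_mul'' pi_gt_d6 hK₀ (by norm_num) (by norm_num)
  have hπs : π * sin (2 * π / 5) ≤ 3.141593 * 0.9510566 :=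
    mul_le_mul pi_lt_d6.le hs₁ hs₀ (by norm_num)
  have hA₀ := two_div_three_le_arccos_sqrt_five_div_three
  have hA₁ := arccos_sqrt_five_div_three_le
  simp only [Ifun, B'_eq, p5'_eq, p5_eq]
  refine ⟨?_, fun ρ hρ => ?_⟩
  · have hℓ : 4.851 ≤ circPerim0 2.29 := le_sqrt_of_sq_le (by nlinarith [pi_gt_d6])
    linarith
  · have hℓ := add_mul_le_circPerim0 hρ
    have hρ₀ : 0 ≤ ρ := by linarith [hρ.1]
    linarith [hρ.1, mul_le_mul_of_nonneg_left hA₁ hρ₀, mul_le_mul_of_nonneg_left hπK.le hρ₀]
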